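/- arXiv:1705.03980 — 2 statements merged into one kernel-verified Lean document; each statement's English description precedes it below -/
import Mathlib

section
/- Let R be a commutative ring and {M_i}_{i ∈ Λ} a family of R-modules. If there is an index i₀ ∈ Λ such that M_{i₀} is an Auslander R-module, then the direct product ∏_{i ∈ Λ} M_i is an Auslander R-module. -/
/-- `Z_R(M)`: the set of zero-divisors of `R` on the `R`-module `M`, i.e. those `r : R`
for which there exists a nonzero `m : M` with `r • m = 0`. -/
def zeroDivisorsOn (R : Type*) [CommRing R] (M : Type*) [AddCommGroup M] [Module R M] :
    Set R :=
  {r : R | ∃ m : M, m ≠ 0 ∧ r • m = 0}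

theorem zeroDivisorsOn_mono_of_injective {R M N : Type*} [CommRing R] [AddCommGroup M]
    [Module R M] [AddCommGroup N] [Module R N] (f : M →ₗ[R] N) (hf : Function.Injective f) :
    zeroDivisorsOn R M ⊆ zeroDivisorsOn R N := by
  rintro r ⟨m, hm, hrm⟩
  exact ⟨f m, (map_ne_zero_iff f hf).mpr hm, by rw [← map_smul, hrm, map_zero]⟩

theorem zeroDivisorsOn_subset_pi (R : Type*) [CommRing R] {ι : Type*} [DecidableEq ι]
    (M : ι → Type*) [∀ i, AddCommGroup (M i)] [∀ i, Module R (M i)] (i : ι) :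
    zeroDivisorsOn R (M i) ⊆ zeroDivisorsOn R (∀ i, M i) :=
  zeroDivisorsOn_mono_of_injective (LinearMap.single R M i) (Pi.single_injective i)

/-- If some member of a family of modules is Auslander, then the direct product is Auslander. -/
theorem directProd_auslander (R : Type*) [CommRing R]
    {ι : Type*} (M : ι → Type*)
    [∀ i, AddCommGroup (M i)] [∀ i, Module R (M i)] (i₀ : ι)
    (h : zeroDivisorsOn R R ⊆ zeroDivisorsOn R (M i₀)) :
    zeroDivisorsOn R R ⊆ zeroDivisorsOn R (∀ i, M i) := by
  classical
  exact h.trans (zeroDivisorsOn_subset_pi R M i₀)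
end

section
/- Let R be a commutative ring and S a multiplicatively closed subset of R consisting of non-zero-divisors of R (i.e., S ⊆ R − Z_R(R)). Then, viewing the localization R_S as an R-module, Z_R(R_S) = Z_R(R); in particular, R_S is both torsion-free and Auslander as an R-module. -/
/-!
If `r • (m / s) = 0` with `m / s ≠ 0` in `M_S`, then `u • r • m = 0` for some `u ∈ S` while
`u • m ≠ 0`, so `r` kills the nonzero element `u • m` of `M`: hence `Z_R(M_S) ⊆ Z_R(M)` for every
multiplicative set `S`. Conversely, when `S` consists of non-zero-divisors, `R → R_S` is an
injective `R`-linear map, and zero-divisors on a module remain zero-divisors on any module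
containing it.
-/

open scoped nonZeroDivisors

section ZeroDivisorsOn

variable {R M N : Type*} [CommRing R] [AddCommGroup M] [Module R M] [AddCommGroup N] [Module R N]

theorem notMem_zeroDivisorsOn_self_iff {r : R} : r ∉ zeroDivisorsOn R R ↔ r ∈ R⁰ := by
  simp only [zeroDivisorsOn, Set.mem_ofPred_eq, not_exists, not_and, smul_eq_mul,
    mem_nonZeroDivisors_iff_right, mul_comm r]
  exact forall_congr' fun x =>
    ⟨fun h hx => not_not.1 fun hx0 => h hx0 hx, fun h hx0 hx => hx0 (h hx)⟩

theorem zeroDivisorsOn_subset_of_injective {f : M →ₗ[R] N} (hf : Function.Injective f) :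
    zeroDivisorsOn R M ⊆ zeroDivisorsOn R N := by
  rintro r ⟨m, hm, hrm⟩
  exact ⟨f m, (map_ne_zero_iff f hf).2 hm, by rw [← map_smul, hrm, map_zero]⟩

theorem IsLocalizedModule.zeroDivisorsOn_subset (S : Submonoid R) (f : M →ₗ[R] N)
    [IsLocalizedModule S f] : zeroDivisorsOn R N ⊆ zeroDivisorsOn R M := by
  rintro r ⟨n, hn, hrn⟩
  obtain ⟨⟨m, s⟩, rfl⟩ := IsLocalizedModule.mk'_surjective S f n
  rw [Function.uncurry_apply_pair, ← IsLocalizedModule.mk'_smul,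
    IsLocalizedModule.mk'_eq_zero'] at hrn
  obtain ⟨u, hu⟩ := hrn
  refine ⟨u • m, fun hum => hn ?_, by rw [smul_comm, hu]⟩
  exact (IsLocalizedModule.mk'_eq_zero' f s).2 ⟨u, hum⟩

end ZeroDivisorsOn

/-- If `S` consists of non-zero-divisors of `R`, then `Z_R(R_S) = Z_R(R)`; in particular,
`R_S` is a torsion-free Auslander `R`-module. -/
theorem localization_zeroDivisors_eq (R : Type*) [CommRing R]
    (S : Submonoid R) (hS : ∀ s ∈ S, s ∉ zeroDivisorsOn R R) :
    zeroDivisorsOn R (Localization S) = zeroDivisorsOn R R := by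
  have hS_le : S ≤ R⁰ := fun s hs => notMem_zeroDivisorsOn_self_iff.1 (hS s hs)
  apply subset_antisymm
  · exact IsLocalizedModule.zeroDivisorsOn_subset S (Algebra.linearMap R (Localization S))
  · exact zeroDivisorsOn_subset_of_injective (f := Algebra.linearMap R (Localization S))
      (IsLocalization.injective (Localization S) hS_le)
end
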